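/- Let m > 0 be a real number and n ≥ 3 an integer. There exists a constant C > 0 depending only on m and n such that for every τ > 0, one has ∫_{ℝ^{n−1}} w_{0,τ}(x,0)² dx ≤ C · τ^{(n−1)/(2(m+n−1))}. -/

import Mathlib

/-!
On the boundary `t = 0`, `w_{0,τ}²` is `τ^{-(n-1)(m+n-2)/(2(m+n-1))}` times the profile
`(1 + c|x|²/τ)^{-(m+n-2)}`. The substitution `x = (τ/c)^{1/2} y` turns the integral of the profile
into `(τ/c)^{(n-1)/2}` times a `τ`-independent integral, and the powers of `τ` add up to
`(n-1)/(2(m+n-1))`. (That integral is finite since `2(m+n-2) > n-1`, but the scaling identity for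
the Bochner integral holds regardless.)
-/

open MeasureTheory Real

noncomputable section

/-- The constant `c(m,n) = (m+n−1)/(m(m+n−2)²)`. -/
def cmn (m : ℝ) (n : ℕ) : ℝ := (m + n - 1) / (m * (m + n - 2) ^ 2)

/-- The model function
`w_{x₀,τ}(x,t) = τ^{−(n−1)(m+n−2)/(4(m+n−1))}
  [(1 + (c(m,n)/τ)^{1/2} t)² + c(m,n)|x−x₀|²/τ]^{−(m+n−2)/2}`. -/
def wModel (m : ℝ) (n : ℕ) (x₀ : EuclideanSpace ℝ (Fin (n - 1))) (τ : ℝ)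
    (p : EuclideanSpace ℝ (Fin (n - 1)) × ℝ) : ℝ :=
  τ ^ (-(((n : ℝ) - 1) * (m + n - 2)) / (4 * (m + n - 1))) *
    ((1 + (cmn m n / τ) ^ ((1 : ℝ) / 2) * p.2) ^ 2 + cmn m n * ‖p.1 - x₀‖ ^ 2 / τ) ^
      (-((m + n - 2) / 2))

open Module

theorem integral_comp_mul_norm_sq {E F : Type*} [NormedAddCommGroup E] [NormedSpace ℝ E]
    [MeasurableSpace E] [BorelSpace E] [FiniteDimensional ℝ E] (μ : Measure E)
    [μ.IsAddHaarMeasure] [NormedAddCommGroup F] [NormedSpace ℝ F] (f : ℝ → F) {a : ℝ}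
    (ha : 0 < a) :
    ∫ x, f (a * ‖x‖ ^ 2) ∂μ = a ^ (-(finrank ℝ E : ℝ) / 2) • ∫ y, f (‖y‖ ^ 2) ∂μ := by
  have hsq : ∀ x : E, a * ‖x‖ ^ 2 = ‖√a • x‖ ^ 2 := fun x => by
    rw [norm_smul, Real.norm_of_nonneg (sqrt_nonneg a), mul_pow, sq_sqrt ha.le]
  simp_rw [hsq]
  rw [Measure.integral_comp_smul_of_nonneg μ (fun y => f (‖y‖ ^ 2)) √a (hR := sqrt_nonneg a),
    sqrt_eq_rpow, ← rpow_natCast, ← rpow_mul ha.le, ← rpow_neg ha.le, neg_div, one_div_mul_eq_div]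

theorem cmn_pos {m : ℝ} (hm : 0 < m) {n : ℕ} (hn : 2 ≤ n) : 0 < cmn m n := by
  have : (2 : ℝ) ≤ n := by exact_mod_cast hn
  have : 0 < m + n - 2 := by linarith
  unfold cmn
  exact div_pos (by linarith) (by positivity)

theorem wModel_zero_boundary_sq {m : ℝ} {n : ℕ} (hc : 0 ≤ cmn m n) {τ : ℝ} (hτ : 0 < τ)
    (x : EuclideanSpace ℝ (Fin (n - 1))) :
    wModel m n 0 τ (x, 0) ^ 2 =
      τ ^ (-(((n : ℝ) - 1) * (m + n - 2)) / (2 * (m + n - 1))) *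
        (1 + cmn m n / τ * ‖x‖ ^ 2) ^ (-(m + n - 2)) := by
  have hbase : 0 ≤ 1 + cmn m n / τ * ‖x‖ ^ 2 := by positivity
  simp only [wModel, mul_zero, add_zero, one_pow, sub_zero]
  rw [mul_pow, ← rpow_mul_natCast hτ.le, mul_div_right_comm, ← rpow_mul_natCast hbase]
  congr 2 <;> push_cast
  · field_simp
    ring
  · ring

theorem integral_wModel_zero_boundary_sq {m : ℝ} (hm : 0 < m) {n : ℕ} (hn : 2 ≤ n) {τ : ℝ}
    (hτ : 0 < τ) :
    ∫ x : EuclideanSpace ℝ (Fin (n - 1)), wModel m n 0 τ (x, 0) ^ 2 =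
      cmn m n ^ (-((n : ℝ) - 1) / 2) *
        (∫ y : EuclideanSpace ℝ (Fin (n - 1)), (1 + ‖y‖ ^ 2) ^ (-(m + n - 2))) *
        τ ^ (((n : ℝ) - 1) / (2 * (m + n - 1))) := by
  have hc := cmn_pos hm hn
  have hn' : (2 : ℝ) ≤ n := by exact_mod_cast hn
  have hdim : (finrank ℝ (EuclideanSpace ℝ (Fin (n - 1))) : ℝ) = n - 1 := by
    rw [finrank_euclideanSpace_fin, Nat.cast_sub (by omega), Nat.cast_one]
  have hexp : -(((n : ℝ) - 1) * (m + n - 2)) / (2 * (m + n - 1)) + (n - 1) / 2 =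
      ((n : ℝ) - 1) / (2 * (m + n - 1)) := by
    have : m + n - 1 ≠ (0 : ℝ) := by linarith
    field_simp
    ring
  have hτinv : τ ^ (-((n : ℝ) - 1) / 2) = (τ ^ (((n : ℝ) - 1) / 2))⁻¹ := by
    rw [neg_div, rpow_neg hτ.le]
  simp_rw [wModel_zero_boundary_sq hc.le hτ]
  rw [integral_const_mul, integral_comp_mul_norm_sq volume (fun r => (1 + r) ^ (-(m + n - 2)))
    (div_pos hc hτ), hdim, smul_eq_mul, div_rpow hc.le hτ.le, hτinv, ← hexp, rpow_add hτ]
  field_simp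

theorem wModel_boundary_L2_estimate (m : ℝ) (hm : 0 < m) (n : ℕ) (hn : 3 ≤ n) :
    ∃ C : ℝ, 0 < C ∧ ∀ τ : ℝ, 0 < τ →
      (∫ x : EuclideanSpace ℝ (Fin (n - 1)), wModel m n 0 τ (x, (0 : ℝ)) ^ 2) ≤
        C * τ ^ (((n : ℝ) - 1) / (2 * (m + n - 1))) := by
  set I := ∫ y : EuclideanSpace ℝ (Fin (n - 1)), (1 + ‖y‖ ^ 2) ^ (-(m + n - 2))
  have hK : 0 ≤ cmn m n ^ (-((n : ℝ) - 1) / 2) * I :=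
    mul_nonneg (rpow_nonneg (cmn_pos hm (by omega)).le _)
      (integral_nonneg fun y => rpow_nonneg (by positivity) _)
  refine ⟨_, add_pos_of_nonneg_of_pos hK one_pos, fun τ hτ => ?_⟩
  rw [integral_wModel_zero_boundary_sq hm (by omega) hτ]
  gcongr
  exact le_add_of_nonneg_right zero_le_one
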